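/- arXiv:2409.08599 — 4 statements merged into one kernel-verified Lean document; each statement's English description precedes it below -/
import Mathlib

section
/- For every off-diagonal state (l,k) ∈ Ω with l ≠ k, the distribution π satisfies the stationarity equation at (l,k): ∑_{(i,j) ∈ Ω} π(i,j)·P((i,j),(l,k)) = π(l,k) = α·m(l,k)/(2|E|). -/
open Finset

namespace RWStmt

variable {V : Type*} [Fintype V] [DecidableEq V]

/-- Out-neighbors: `N_out(v) = {u : (v,u) ∈ E}`. -/
def Nout (E : Finset (V × V)) (v : V) : Finset V :=
  Finset.univ.filter fun u => (v, u) ∈ E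

/-- In-neighbors: `N_in(v) = {u : (u,v) ∈ E}`. -/
def Nin (E : Finset (V × V)) (v : V) : Finset V :=
  Finset.univ.filter fun u => (u, v) ∈ E

/-- Neighbors: `N(v) = N_out(v) ∪ N_in(v)`. -/
def Nbr (E : Finset (V × V)) (v : V) : Finset V :=
  Nout E v ∪ Nin E v

/-- Total degree: `d_sum(v) = d_out(v) + d_in(v)`. -/
def dsum (E : Finset (V × V)) (v : V) : ℕ :=
  (Nout E v).card + (Nin E v).card

/-- Edge multiplicity: `m(i,j) = 𝟙[j ∈ N_out(i)] + 𝟙[j ∈ N_in(i)]`. -/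
def edgeMul (E : Finset (V × V)) (i j : V) : ℝ :=
  (if j ∈ Nout E i then 1 else 0) + (if j ∈ Nin E i then 1 else 0)

/-- State space `Ω = {(i,j) : (i,j) ∈ E or (j,i) ∈ E or i = j}`. -/
def states (E : Finset (V × V)) : Finset (V × V) :=
  Finset.univ.filter fun p => p ∈ E ∨ (p.2, p.1) ∈ E ∨ p.1 = p.2

/-- The graph is weakly connected: any two vertices are joined by a path in the
symmetric closure of the edge relation. -/
def WeaklyConnected (E : Finset (V × V)) : Prop :=
  ∀ i j : V, Relation.ReflTransGen (fun a b => (a, b) ∈ E ∨ (b, a) ∈ E) i j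

/-- Transition matrix of the proposed sampling algorithm:
`P((i,j),(l,k)) = α·m(i,k)/d_sum(i)` if `l = i`;
`(1-α)·m(i,k)/d_sum(i)` if `l = k` and `l ∈ N(i)`; else `0`. -/
noncomputable def trans (E : Finset (V × V)) (α : ℝ) (e e' : V × V) : ℝ :=
  if e'.1 = e.1 then α * edgeMul E e.1 e'.2 / (dsum E e.1 : ℝ)
  else if e'.1 = e'.2 ∧ e'.1 ∈ Nbr E e.1 then
    (1 - α) * edgeMul E e.1 e'.2 / (dsum E e.1 : ℝ)
  else 0

/-- The stationary distribution:
`π(i,j) = α·m(i,j)/(2|E|)` for `i ≠ j`, and `π(i,i) = (1-α)·d_sum(i)/(2|E|)`. -/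
noncomputable def statDist (E : Finset (V × V)) (α : ℝ) (e : V × V) : ℝ :=
  if e.1 = e.2 then (1 - α) * (dsum E e.1 : ℝ) / (2 * (E.card : ℝ))
  else α * edgeMul E e.1 e.2 / (2 * (E.card : ℝ))

/-- stationarity equation at every off-diagonal state `(l,k) ∈ Ω`:
`∑_{(i,j) ∈ Ω} π(i,j)·P((i,j),(l,k)) = π(l,k) = α·m(l,k)/(2|E|)`. -/
theorem stmt_4 (E : Finset (V × V)) (hE : ∀ v : V, (v, v) ∉ E)
    (hconn : WeaklyConnected E) (hcard : 2 ≤ Fintype.card V)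
    (α : ℝ) (hα0 : 0 ≤ α) (hα1 : α < 1)
    (e' : V × V) (he' : e' ∈ states E) (hne : e'.1 ≠ e'.2) :
    ∑ e ∈ states E, statDist E α e * trans E α e e' = statDist E α e' ∧
    statDist E α e' = α * edgeMul E e'.1 e'.2 / (2 * (E.card : ℝ)) := by
  obtain ⟨l, k⟩ := e'
  simp only at hne
  have hd : 0 < dsum E l := by
    obtain ⟨j, hj⟩ := Fintype.exists_ne_of_one_lt_card (by omega) l
    rcases (hconn l j).cases_head with h | ⟨b, hb, _⟩
    · exact absurd h.symm hj
    · rcases hb with h | h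
      · have hb' : b ∈ Nout E l := by simp [Nout, h]
        have := Finset.card_pos.mpr ⟨b, hb'⟩
        simp only [dsum]; omega
      · have hb' : b ∈ Nin E l := by simp [Nin, h]
        have := Finset.card_pos.mpr ⟨b, hb'⟩
        simp only [dsum]; omega
  have hEne : E.Nonempty := by
    by_contra h
    rw [Finset.not_nonempty_iff_eq_empty] at h
    subst h
    simp [dsum, Nout, Nin] at hd
  have hEcard : (E.card : ℝ) ≠ 0 := by
    have := Finset.card_pos.mpr hEne
    positivity
  have hdr : (dsum E l : ℝ) ≠ 0 := by positivity
  have hπ : statDist E α (l, k) = α * edgeMul E l k / (2 * (E.card : ℝ)) := by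
    simp [statDist, hne]
  refine ⟨?_, hπ⟩
  -- rewrite the transition probability
  have htr : ∀ e : V × V, trans E α e (l, k) =
      if l = e.1 then α * edgeMul E e.1 k / (dsum E e.1 : ℝ) else 0 := by
    intro e
    simp only [trans]
    by_cases h : l = e.1 <;> simp [h, hne]
  have hsum : ∑ e ∈ states E, statDist E α e * trans E α e (l, k)
      = ∑ e ∈ (states E).filter (fun e => l = e.1),
          statDist E α e * (α * edgeMul E e.1 k / (dsum E e.1 : ℝ)) := by
    rw [Finset.sum_filter]
    refine Finset.sum_congr rfl fun e _ => ?_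
    rw [htr e]
    by_cases h : l = e.1 <;> simp [h]
  rw [hsum]
  -- reindex by second coordinate
  set T : Finset V := Finset.univ.filter
      (fun j => (l, j) ∈ E ∨ (j, l) ∈ E ∨ l = j) with hT
  have himg : (states E).filter (fun e => l = e.1) = T.image (fun j => (l, j)) := by
    ext ⟨a, b⟩
    simp only [Finset.mem_filter, states, Finset.mem_univ, true_and, Finset.mem_image,
      hT, Prod.mk.injEq]
    constructor
    · rintro ⟨h1, rfl⟩
      exact ⟨b, h1, rfl, rfl⟩
    · rintro ⟨j, hj, rfl, rfl⟩
      exact ⟨hj, rfl⟩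
  have hbij : ∑ e ∈ (states E).filter (fun e => l = e.1),
      statDist E α e * (α * edgeMul E e.1 k / (dsum E e.1 : ℝ))
      = ∑ j ∈ T, statDist E α (l, j) * (α * edgeMul E l k / (dsum E l : ℝ)) := by
    rw [himg, Finset.sum_image (by intro x _ y _ h; simpa using h)]
  rw [hbij, ← Finset.sum_mul]
  have hTeq : T = insert l (Nbr E l) := by
    ext j
    simp only [hT, Finset.mem_filter, Finset.mem_univ, true_and, Finset.mem_insert,
      Nbr, Finset.mem_union, Nout, Nin]
    constructor
    · rintro (h | h | h)
      · exact Or.inr (Or.inl h)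
      · exact Or.inr (Or.inr h)
      · exact Or.inl h.symm
    · rintro (rfl | h | h)
      · exact Or.inr (Or.inr rfl)
      · exact Or.inl h
      · exact Or.inr (Or.inl h)
  have hlnbr : l ∉ Nbr E l := by
    simp [Nbr, Nout, Nin, hE l]
  have hSval : ∑ j ∈ T, statDist E α (l, j) = (dsum E l : ℝ) / (2 * (E.card : ℝ)) := by
    rw [hTeq, Finset.sum_insert hlnbr]
    have h1 : statDist E α (l, l) = (1 - α) * (dsum E l : ℝ) / (2 * (E.card : ℝ)) := by
      simp [statDist]
    have h2 : ∀ j ∈ Nbr E l, statDist E α (l, j)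
        = α * edgeMul E l j / (2 * (E.card : ℝ)) := by
      intro j hj
      have : l ≠ j := fun h => hlnbr (h ▸ hj)
      simp [statDist, this]
    rw [h1, Finset.sum_congr rfl h2]
    have h3 : ∑ j ∈ Nbr E l, edgeMul E l j = (dsum E l : ℝ) := by
      simp only [edgeMul, Finset.sum_add_distrib]
      rw [Finset.sum_ite_mem, Finset.sum_ite_mem,
        show Nbr E l ∩ Nout E l = Nout E l from
          Finset.inter_eq_right.mpr Finset.subset_union_left,
        show Nbr E l ∩ Nin E l = Nin E l from
          Finset.inter_eq_right.mpr Finset.subset_union_right]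
      simp [dsum]
    have : ∑ j ∈ Nbr E l, α * edgeMul E l j / (2 * (E.card : ℝ))
        = α * (dsum E l : ℝ) / (2 * (E.card : ℝ)) := by
      rw [← h3, Finset.mul_sum, Finset.sum_div]
    rw [this]
    ring
  rw [hSval, hπ]
  field_simp

end RWStmt
end

section
/- For every diagonal state (l,l) ∈ Ω, the distribution π satisfies the stationarity equation at (l,l): ∑_{(i,j) ∈ Ω} π(i,j)·P((i,j),(l,l)) = π(l,l) = (1−α)·d_sum(l)/(2|E|). -/
open Finset

namespace RWStmt

variable {V : Type*} [Fintype V] [DecidableEq V]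

lemma mem_Nbr (E : Finset (V × V)) (i j : V) :
    j ∈ Nbr E i ↔ (i, j) ∈ E ∨ (j, i) ∈ E := by
  simp [Nbr, Nout, Nin]

lemma Nbr_comm (E : Finset (V × V)) (i j : V) :
    j ∈ Nbr E i ↔ i ∈ Nbr E j := by
  simp [mem_Nbr, or_comm]

lemma edgeMul_comm (E : Finset (V × V)) (i j : V) :
    edgeMul E i j = edgeMul E j i := by
  simp [edgeMul, Nout, Nin, add_comm]

lemma edgeMul_eq_zero {E : Finset (V × V)} {i j : V} (h : j ∉ Nbr E i) :
    edgeMul E i j = 0 := by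
  rw [Nbr, Finset.mem_union, not_or] at h
  simp [edgeMul, h.1, h.2]

lemma edgeMul_self (E : Finset (V × V)) (hE : ∀ v : V, (v, v) ∉ E) (i : V) :
    edgeMul E i i = 0 :=
  edgeMul_eq_zero (by simp [mem_Nbr, hE i])

lemma sum_edgeMul (E : Finset (V × V)) (i : V) :
    ∑ j, edgeMul E i j = (dsum E i : ℝ) := by
  simp [edgeMul, dsum, Finset.sum_add_distrib, Finset.sum_ite_mem]

lemma dsum_pos {E : Finset (V × V)} {i j : V} (h : j ∈ Nbr E i) :
    0 < dsum E i := by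
  rw [Nbr, Finset.mem_union] at h
  rcases h with h | h
  · exact Nat.lt_of_lt_of_le (Finset.card_pos.mpr ⟨j, h⟩) (Nat.le_add_right _ _)
  · exact Nat.lt_of_lt_of_le (Finset.card_pos.mpr ⟨j, h⟩) (Nat.le_add_left _ _)

lemma not_self_mem_Nbr {E : Finset (V × V)} (hE : ∀ v : V, (v, v) ∉ E) (i : V) :
    i ∉ Nbr E i := by
  simp [mem_Nbr, hE i]

/-- stationarity equation at every diagonal state `(l,l) ∈ Ω`:
`∑_{(i,j) ∈ Ω} π(i,j)·P((i,j),(l,l)) = π(l,l) = (1-α)·d_sum(l)/(2|E|)`. -/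
theorem stmt_5 (E : Finset (V × V)) (hE : ∀ v : V, (v, v) ∉ E)
    (hconn : WeaklyConnected E) (hcard : 2 ≤ Fintype.card V)
    (α : ℝ) (hα0 : 0 ≤ α) (hα1 : α < 1) (l : V) :
    ∑ e ∈ states E, statDist E α e * trans E α e (l, l) = statDist E α (l, l) ∧
    statDist E α (l, l) = (1 - α) * (dsum E l : ℝ) / (2 * (E.card : ℝ)) := by
  have hC : statDist E α (l, l) = (1 - α) * (dsum E l : ℝ) / (2 * (E.card : ℝ)) := by
    simp [statDist]
  refine ⟨?_, hC⟩
  set C : ℝ := 2 * (E.card : ℝ) with hCdef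
  rw [states, Finset.sum_filter, Fintype.sum_prod_type]
  have hinner : ∀ i : V,
      (∑ j, if ((i, j) ∈ E ∨ (j, i) ∈ E ∨ i = j) then
        statDist E α (i, j) * trans E α (i, j) (l, l) else 0)
      = if l ∈ Nbr E i then (1 - α) * edgeMul E l i / C else 0 := by
    intro i
    by_cases hi : l ∈ Nbr E i
    · have hil : l ≠ i := fun h => not_self_mem_Nbr hE i (h ▸ hi)
      have hd : (0 : ℝ) < (dsum E i : ℝ) := by exact_mod_cast dsum_pos hi
      have htr : ∀ j : V, trans E α (i, j) (l, l)
          = (1 - α) * edgeMul E i l / (dsum E i : ℝ) := by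
        intro j
        simp [trans, hil, hi]
      have hsplit : ∀ j : V,
          (if ((i, j) ∈ E ∨ (j, i) ∈ E ∨ i = j) then
            statDist E α (i, j) * trans E α (i, j) (l, l) else 0)
          = (if ((i, j) ∈ E ∨ (j, i) ∈ E ∨ i = j) then statDist E α (i, j) else 0)
            * ((1 - α) * edgeMul E i l / (dsum E i : ℝ)) := by
        intro j
        rw [htr j, ite_mul, zero_mul]
      simp only [hsplit]
      rw [← Finset.sum_mul]
      have hS : (∑ j, if ((i, j) ∈ E ∨ (j, i) ∈ E ∨ i = j) then
            statDist E α (i, j) else 0) = (dsum E i : ℝ) / C := by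
        rw [← Finset.add_sum_erase _ _ (Finset.mem_univ i)]
        have h1 : (if ((i, i) ∈ E ∨ (i, i) ∈ E ∨ i = i) then statDist E α (i, i) else 0)
            = (1 - α) * (dsum E i : ℝ) / C := by simp [statDist, hCdef]
        have h2 : ∀ j ∈ Finset.univ.erase i,
            (if ((i, j) ∈ E ∨ (j, i) ∈ E ∨ i = j) then statDist E α (i, j) else 0)
            = α * edgeMul E i j / C := by
          intro j hj
          have hji : j ≠ i := (Finset.mem_erase.mp hj).1
          by_cases hjn : j ∈ Nbr E i
          · have := (mem_Nbr E i j).mp hjn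
            rw [if_pos (by tauto), statDist]
            simp [hji.symm, hCdef]
          · have hz : edgeMul E i j = 0 := edgeMul_eq_zero hjn
            rw [mem_Nbr] at hjn
            rw [if_neg (by tauto), hz]
            ring
        rw [h1, Finset.sum_congr rfl h2]
        have h3 : (∑ j ∈ Finset.univ.erase i, α * edgeMul E i j / C)
            = ∑ j, α * edgeMul E i j / C := by
          apply Finset.sum_erase
          rw [edgeMul_self E hE i]
          ring
        rw [h3]
        have h4 : (∑ j, α * edgeMul E i j / C) = α * (dsum E i : ℝ) / C := by
          rw [← Finset.sum_div, ← Finset.mul_sum, sum_edgeMul]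
        rw [h4]
        ring
      rw [hS, if_pos hi, mul_comm ((dsum E i : ℝ) / C), div_mul_div_comm,
        mul_comm ((dsum E i : ℝ)) C, mul_div_mul_right _ _ hd.ne', edgeMul_comm]
    · have htr0 : ∀ j : V, trans E α (i, j) (l, l) = 0 := by
        intro j
        by_cases h : l = i
        · subst h
          simp [trans, edgeMul_self E hE]
        · simp [trans, h, hi]
      simp [htr0, hi]
  rw [Finset.sum_congr rfl fun i _ => hinner i]
  have hall : ∀ i : V, (if l ∈ Nbr E i then (1 - α) * edgeMul E l i / C else 0)
      = (1 - α) * edgeMul E l i / C := by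
    intro i
    by_cases h : l ∈ Nbr E i
    · rw [if_pos h]
    · rw [if_neg h, edgeMul_eq_zero (by rwa [← Nbr_comm])]
      ring
  simp only [hall]
  rw [hC, ← Finset.sum_div, ← Finset.mul_sum, sum_edgeMul]

end RWStmt
end

section
/- If 0 < α < 1, the Markov chain with transition matrix P is ergodic (irreducible and aperiodic): there exists a positive integer t such that every entry of the matrix power P^t is strictly positive, i.e., (P^t)(e, e') > 0 for all states e, e' ∈ Ω. -/
/-!
Irreducibility: from `(i, j)` the chain can move to the diagonal state `(j, j)`, walk along
diagonal states `(v, v) → (w, w)` over edges of the underlying undirected graph, and finally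
step from `(k, k)` to `(k, l)`, so weak connectivity makes every state reachable from every
other. Aperiodicity: a state `(v, w)` with `w ∈ N(v)`, which exists since `|V| ≥ 2`, carries a
self-loop of weight `α·m(v, w)/d_sum(v) > 0`. Routing a path `e → e'` through this state and
idling there shows `P^m(e, e') > 0` for all large `m`, uniformly over the finitely many pairs.
-/

open Finset

namespace RWStmt

variable {V : Type*} [Fintype V] [DecidableEq V]

/-- `t`-step transition probabilities (matrix power of `P` over `Ω`). -/
noncomputable def transPow (E : Finset (V × V)) (α : ℝ) :
    ℕ → (V × V) → (V × V) → ℝ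
  | 0, e, e' => if e = e' then 1 else 0
  | n + 1, e, e' => ∑ f ∈ states E, transPow E α n e f * trans E α f e'

open Filter

section Chain

variable {E : Finset (V × V)} {α : ℝ}

lemma mem_nbr_iff {i j : V} : j ∈ Nbr E i ↔ (i, j) ∈ E ∨ (j, i) ∈ E := by
  simp [Nbr, Nout, Nin]

lemma mem_states_iff {i j : V} : (i, j) ∈ states E ↔ i = j ∨ j ∈ Nbr E i := by
  simp only [states, mem_filter, mem_univ, true_and, mem_nbr_iff]
  tauto

lemma dsum_pos_of_mem_nbr {i j : V} (h : j ∈ Nbr E i) : 0 < dsum E i :=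
  (card_pos.2 ⟨j, h⟩).trans_le (card_union_le _ _)

lemma edgeMul_nonneg (i j : V) : 0 ≤ edgeMul E i j := by
  unfold edgeMul
  split_ifs <;> norm_num

lemma edgeMul_pos {i j : V} (h : j ∈ Nbr E i) : 0 < edgeMul E i j := by
  unfold edgeMul
  rcases mem_union.1 h with h | h <;> simp only [h, if_true] <;> split_ifs <;> norm_num

lemma exists_mem_nbr (hconn : WeaklyConnected E) (hcard : 2 ≤ Fintype.card V) :
    ∃ v w : V, w ∈ Nbr E v := by
  obtain ⟨v, u, hvu⟩ := Fintype.exists_pair_of_one_lt_card hcard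
  rcases (hconn v u).cases_head with rfl | ⟨w, hw, -⟩
  · exact absurd rfl hvu
  · exact ⟨v, w, mem_nbr_iff.2 hw⟩

lemma transPow_zero_pos_iff {e e' : V × V} : 0 < transPow E α 0 e e' ↔ e = e' := by
  simp only [transPow]
  split_ifs <;> simp [*]

section Positivity

variable (hα0 : 0 ≤ α) (hα1 : α ≤ 1)
include hα0 hα1

lemma trans_nonneg (e e' : V × V) : 0 ≤ trans E α e e' := by
  have hm := edgeMul_nonneg (E := E) e.1 e'.2
  unfold trans
  split_ifs
  · exact div_nonneg (mul_nonneg hα0 hm) (Nat.cast_nonneg _)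
  · exact div_nonneg (mul_nonneg (sub_nonneg.2 hα1) hm) (Nat.cast_nonneg _)
  · exact le_rfl

lemma transPow_nonneg (n : ℕ) (e e' : V × V) : 0 ≤ transPow E α n e e' := by
  induction n generalizing e' with
  | zero => simp only [transPow]; split_ifs <;> norm_num
  | succ n ih => exact sum_nonneg fun f _ => mul_nonneg (ih f) (trans_nonneg hα0 hα1 f e')

lemma transPow_succ_pos_iff {n : ℕ} {e e' : V × V} :
    0 < transPow E α (n + 1) e e' ↔
      ∃ f ∈ states E, 0 < transPow E α n e f ∧ 0 < trans E α f e' := by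
  have hP := transPow_nonneg (E := E) hα0 hα1 n e
  have hT := fun f => trans_nonneg hα0 hα1 (E := E) f e'
  rw [transPow, sum_pos_iff_of_nonneg fun f _ => mul_nonneg (hP f) (hT f)]
  refine exists_congr fun f => and_congr_right fun _ => ⟨fun h => ?_, fun h => mul_pos h.1 h.2⟩
  exact ⟨pos_of_mul_pos_left h (hT f), pos_of_mul_pos_right h (hP f)⟩

lemma transPow_one_pos {e e' : V × V} (he : e ∈ states E) (h : 0 < trans E α e e') :
    0 < transPow E α 1 e e' :=
  (transPow_succ_pos_iff hα0 hα1).2 ⟨e, he, transPow_zero_pos_iff.2 rfl, h⟩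

lemma transPow_add_pos {n m : ℕ} {e f g : V × V} (hef : 0 < transPow E α n e f)
    (hfg : 0 < transPow E α m f g) : 0 < transPow E α (n + m) e g := by
  induction m generalizing g with
  | zero => rwa [← transPow_zero_pos_iff.1 hfg]
  | succ m ih =>
    obtain ⟨h, hh, hfh, hhg⟩ := (transPow_succ_pos_iff hα0 hα1).1 hfg
    exact (transPow_succ_pos_iff hα0 hα1).2 ⟨h, hh, ih hfh, hhg⟩

lemma transPow_self_pos_of_trans_self_pos {e : V × V} (he : e ∈ states E)
    (h : 0 < trans E α e e) (n : ℕ) : 0 < transPow E α n e e := by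
  induction n with
  | zero => exact transPow_zero_pos_iff.2 rfl
  | succ n ih => exact transPow_add_pos hα0 hα1 ih (transPow_one_pos hα0 hα1 he h)

end Positivity

lemma trans_pos_of_mem_nbr (hα0 : 0 < α) {i j k : V} (h : k ∈ Nbr E i) :
    0 < trans E α (i, j) (i, k) := by
  have hd : (0 : ℝ) < dsum E i := Nat.cast_pos.2 (dsum_pos_of_mem_nbr h)
  simpa [trans] using div_pos (mul_pos hα0 (edgeMul_pos h)) hd

lemma trans_diag_pos_of_mem_nbr (hα0 : 0 < α) (hα1 : α < 1) {i j k : V} (h : k ∈ Nbr E i) :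
    0 < trans E α (i, j) (k, k) := by
  rcases eq_or_ne k i with rfl | hki
  · exact trans_pos_of_mem_nbr hα0 h
  have hd : (0 : ℝ) < dsum E i := Nat.cast_pos.2 (dsum_pos_of_mem_nbr h)
  simpa [trans, hki, h] using div_pos (mul_pos (sub_pos.2 hα1) (edgeMul_pos h)) hd

section Reachability

variable (hα0 : 0 < α) (hα1 : α < 1)
include hα0 hα1

lemma exists_transPow_pos_to_diag {i j : V} (h : (i, j) ∈ states E) :
    ∃ n, 0 < transPow E α n (i, j) (j, j) := by
  rcases mem_states_iff.1 h with rfl | hj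
  · exact ⟨0, transPow_zero_pos_iff.2 rfl⟩
  · exact ⟨1, transPow_one_pos hα0.le hα1.le h (trans_diag_pos_of_mem_nbr hα0 hα1 hj)⟩

lemma exists_transPow_pos_from_diag {k l : V} (h : (k, l) ∈ states E) :
    ∃ n, 0 < transPow E α n (k, k) (k, l) := by
  rcases mem_states_iff.1 h with rfl | hl
  · exact ⟨0, transPow_zero_pos_iff.2 rfl⟩
  · exact ⟨1, transPow_one_pos hα0.le hα1.le (mem_states_iff.2 (.inl rfl))
      (trans_pos_of_mem_nbr hα0 hl)⟩

lemma exists_transPow_pos_diag {v w : V}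
    (h : Relation.ReflTransGen (fun a b => (a, b) ∈ E ∨ (b, a) ∈ E) v w) :
    ∃ n, 0 < transPow E α n (v, v) (w, w) := by
  induction h with
  | refl => exact ⟨0, transPow_zero_pos_iff.2 rfl⟩
  | tail _ hbc ih =>
    obtain ⟨n, hn⟩ := ih
    exact ⟨n + 1, (transPow_succ_pos_iff hα0.le hα1.le).2 ⟨_, mem_states_iff.2 (.inl rfl), hn,
      trans_diag_pos_of_mem_nbr hα0 hα1 (mem_nbr_iff.2 hbc)⟩⟩

lemma exists_transPow_pos (hconn : WeaklyConnected E) {e e' : V × V}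
    (he : e ∈ states E) (he' : e' ∈ states E) : ∃ n, 0 < transPow E α n e e' := by
  obtain ⟨i, j⟩ := e
  obtain ⟨k, l⟩ := e'
  obtain ⟨n₁, h₁⟩ := exists_transPow_pos_to_diag hα0 hα1 he
  obtain ⟨n₂, h₂⟩ := exists_transPow_pos_diag hα0 hα1 (hconn j k)
  obtain ⟨n₃, h₃⟩ := exists_transPow_pos_from_diag hα0 hα1 he'
  exact ⟨n₁ + n₂ + n₃,
    transPow_add_pos hα0.le hα1.le (transPow_add_pos hα0.le hα1.le h₁ h₂) h₃⟩

lemma eventually_transPow_pos (hconn : WeaklyConnected E) {e₀ : V × V}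
    (he₀ : e₀ ∈ states E) (hloop : 0 < trans E α e₀ e₀) {e e' : V × V}
    (he : e ∈ states E) (he' : e' ∈ states E) : ∀ᶠ m in atTop, 0 < transPow E α m e e' := by
  obtain ⟨a, ha⟩ := exists_transPow_pos hα0 hα1 hconn he he₀
  obtain ⟨b, hb⟩ := exists_transPow_pos hα0 hα1 hconn he₀ he'
  filter_upwards [eventually_ge_atTop (a + b)] with m hm
  obtain ⟨k, rfl⟩ : ∃ k, m = a + k + b := ⟨m - a - b, by omega⟩
  exact transPow_add_pos hα0.le hα1.le (transPow_add_pos hα0.le hα1.le ha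
    (transPow_self_pos_of_trans_self_pos hα0.le hα1.le he₀ hloop k)) hb

end Reachability

end Chain

theorem stmt_8_general (E : Finset (V × V))
    (hconn : WeaklyConnected E) (hcard : 2 ≤ Fintype.card V)
    (α : ℝ) (hα0 : 0 < α) (hα1 : α < 1) :
    ∃ t : ℕ, 0 < t ∧ ∀ e ∈ states E, ∀ e' ∈ states E,
      0 < transPow E α t e e' := by
  obtain ⟨v, w, hw⟩ := exists_mem_nbr hconn hcard
  have hloop : 0 < trans E α (v, w) (v, w) := trans_pos_of_mem_nbr hα0 hw
  have hpos : ∀ᶠ t in atTop, ∀ e ∈ states E, ∀ e' ∈ states E, 0 < transPow E α t e e' := by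
    simp only [eventually_all_finset]
    exact fun e he e' he' =>
      eventually_transPow_pos hα0 hα1 hconn (mem_states_iff.2 (.inr hw)) hloop he he'
  exact ((eventually_gt_atTop 0).and hpos).exists

/-- if `0 < α < 1`, the chain is ergodic: some positive power of
`P` has all entries strictly positive on `Ω × Ω`. -/
theorem stmt_8 (E : Finset (V × V)) (hE : ∀ v : V, (v, v) ∉ E)
    (hconn : WeaklyConnected E) (hcard : 2 ≤ Fintype.card V)
    (α : ℝ) (hα0 : 0 < α) (hα1 : α < 1) :
    ∃ t : ℕ, 0 < t ∧ ∀ e ∈ states E, ∀ e' ∈ states E,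
      0 < transPow E α t e e' :=
  stmt_8_general E hconn hcard α hα0 hα1

end RWStmt
end

section
/- The reweighted estimator is unbiased at stationarity: for any function f : V → ℝ, with g(i,j) = f(j) and w(i,j) = 1/d_sum(j), the ratio of π-expectations equals the uniform average of f over V, i.e., (∑_{(i,j) ∈ Ω} π(i,j)·w(i,j)·g(i,j)) / (∑_{(i,j) ∈ Ω} π(i,j)·w(i,j)) = (1/n) · ∑_{v ∈ V} f(v). -/
open Finset

namespace RWStmt

variable {V : Type*} [Fintype V] [DecidableEq V]

lemma dsum_pos_s13 (E : Finset (V × V)) (hconn : WeaklyConnected E)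
    (hcard : 2 ≤ Fintype.card V) (j : V) : 0 < dsum E j := by
  obtain ⟨u, hu⟩ := Fintype.exists_ne_of_one_lt_card (by omega) j
  rcases (hconn j u).cases_head with h | ⟨b, hb, _⟩
  · exact absurd h.symm hu
  · rcases hb with h | h
    · have hb : b ∈ Nout E j := by simp [Nout, h]
      have := Finset.card_pos.2 ⟨b, hb⟩
      unfold dsum; omega
    · have hb : b ∈ Nin E j := by simp [Nin, h]
      have := Finset.card_pos.2 ⟨b, hb⟩
      unfold dsum; omega

lemma key (E : Finset (V × V)) (hE : ∀ v : V, (v, v) ∉ E) (α : ℝ) (j : V) :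
    ∑ i : V, (if (i, j) ∈ E ∨ (j, i) ∈ E ∨ i = j then statDist E α (i, j) else 0)
      = (dsum E j : ℝ) / (2 * (E.card : ℝ)) := by
  have hpt : ∀ i : V,
      (if (i, j) ∈ E ∨ (j, i) ∈ E ∨ i = j then statDist E α (i, j) else 0)
      = (if i = j then (1 - α) * (dsum E j : ℝ) / (2 * (E.card : ℝ)) else 0)
        + α * ((if (i, j) ∈ E then (1:ℝ) else 0) + (if (j, i) ∈ E then (1:ℝ) else 0))
            / (2 * (E.card : ℝ)) := by
    intro i
    by_cases hij : i = j
    · subst hij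
      simp [statDist, hE i]
    · simp only [statDist, edgeMul, Nout, Nin, Finset.mem_filter, Finset.mem_univ, true_and]
      by_cases h1 : (i, j) ∈ E <;> by_cases h2 : (j, i) ∈ E <;>
        simp [hij, h1, h2]
  rw [Finset.sum_congr rfl fun i _ => hpt i, Finset.sum_add_distrib,
    Finset.sum_ite_eq' Finset.univ j]
  simp only [Finset.mem_univ, if_true]
  have h1 : ∑ i : V, α * ((if (i, j) ∈ E then (1:ℝ) else 0) + (if (j, i) ∈ E then (1:ℝ) else 0))
      / (2 * (E.card : ℝ)) = α * (dsum E j : ℝ) / (2 * (E.card : ℝ)) := by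
    rw [← Finset.sum_div, ← Finset.mul_sum, Finset.sum_add_distrib]
    have hin : ∑ i : V, (if (i, j) ∈ E then (1:ℝ) else 0) = ((Nin E j).card : ℝ) := by
      rw [Finset.sum_boole]; simp [Nin]
    have hout : ∑ i : V, (if (j, i) ∈ E then (1:ℝ) else 0) = ((Nout E j).card : ℝ) := by
      rw [Finset.sum_boole]; simp [Nout]
    rw [hin, hout, dsum]; push_cast; ring
  rw [h1]
  ring

/-- the reweighted estimator is unbiased at stationarity:
`(∑_{(i,j)∈Ω} π·w·g) / (∑_{(i,j)∈Ω} π·w) = (1/n)·∑_v f(v)` where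
`g(i,j) = f(j)` and `w(i,j) = 1/d_sum(j)`. -/
theorem stmt_13 (E : Finset (V × V)) (hE : ∀ v : V, (v, v) ∉ E)
    (hconn : WeaklyConnected E) (hcard : 2 ≤ Fintype.card V)
    (hEcard : 1 ≤ E.card)
    (α : ℝ) (hα0 : 0 ≤ α) (hα1 : α < 1) (f : V → ℝ) :
    (∑ e ∈ states E, statDist E α e * (1 / (dsum E e.2 : ℝ)) * f e.2) /
        (∑ e ∈ states E, statDist E α e * (1 / (dsum E e.2 : ℝ)))
      = (1 / (Fintype.card V : ℝ)) * ∑ v : V, f v := by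
  have hsum : ∀ g : V → ℝ, ∑ e ∈ states E, statDist E α e * (1 / (dsum E e.2 : ℝ)) * g e.2
      = (∑ j, g j) / (2 * (E.card : ℝ)) := by
    intro g
    rw [states, Finset.sum_filter, Fintype.sum_prod_type, Finset.sum_comm]
    have hj : ∀ j : V, (∑ i : V, if (i, j) ∈ E ∨ (j, i) ∈ E ∨ i = j then
        statDist E α (i, j) * (1 / (dsum E j : ℝ)) * g j else 0)
        = g j / (2 * (E.card : ℝ)) := ?_
    · rw [Finset.sum_congr rfl fun j _ => hj j, Finset.sum_div]
    intro j
    have hd : (dsum E j : ℝ) ≠ 0 := Nat.cast_ne_zero.2 (dsum_pos_s13 E hconn hcard j).ne'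
    have hpt : ∀ i : V, (if (i, j) ∈ E ∨ (j, i) ∈ E ∨ i = j then
        statDist E α (i, j) * (1 / (dsum E j : ℝ)) * g j else 0)
      = (if (i, j) ∈ E ∨ (j, i) ∈ E ∨ i = j then statDist E α (i, j) else 0)
          * (1 / (dsum E j : ℝ) * g j) := by
      intro i; split <;> ring
    rw [Finset.sum_congr rfl fun i _ => hpt i, ← Finset.sum_mul, key E hE α j]
    field_simp
  rw [hsum f]
  have h1 := hsum (fun _ => 1)
  simp only [mul_one] at h1
  rw [h1, Finset.sum_const, Finset.card_univ, nsmul_eq_mul, mul_one]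
  have hm : (2 * (E.card : ℝ)) ≠ 0 := by
    have : (0:ℝ) < E.card := by exact_mod_cast hEcard
    positivity
  have hn : (Fintype.card V : ℝ) ≠ 0 := by
    have : 0 < Fintype.card V := by omega
    exact Nat.cast_ne_zero.2 this.ne'
  field_simp

end RWStmt
end
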